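/- arXiv:2210.02394 — 7 statements merged into one kernel-verified Lean document; each statement's English description precedes it below -/
import Mathlib

section
/- Let d ≥ 0 be an integer, let n_0, …, n_{4d+1} be positive integers, and let G be the circular graph S_d(n_0, …, n_{4d+1}) with clusters V_0, …, V_{4d+1}. Then for every edge (u,v) of G there are at least 2d + 2 indices j ∈ {0, …, 4d+1} such that for every vertex w ∈ V_j with w ∉ {u, v}, the triad {u, v, w} is balanced in G. -/
open Finset

/-- A signed graph on `n` vertices: `true` = friendship (+1), `false` = enmity (−1). -/
abbrev SignedGraph (n : ℕ) := Fin n → Fin n → Bool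

/-- The sign assignment is symmetric (it is an assignment to undirected edges). -/
def Symm {n : ℕ} (G : SignedGraph n) : Prop := ∀ u v, G u v = G v u

/-- The triad `{u,v,w}` is balanced: it contains an even number (0 or 2) of enmity edges. -/
def BalancedTriad {n : ℕ} (G : SignedGraph n) (u v w : Fin n) : Prop :=
  Bool.xor (G u v) (Bool.xor (G v w) (G u w)) = true

instance {n : ℕ} (G : SignedGraph n) (u v w : Fin n) :
    Decidable (BalancedTriad G u v w) :=
  inferInstanceAs (Decidable (_ = true))

/-- The rank of the edge `(u,v)`: the number of imbalanced triads containing it. -/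
def rank {n : ℕ} (G : SignedGraph n) (u v : Fin n) : ℕ :=
  (univ.filter (fun w => w ≠ u ∧ w ≠ v ∧ ¬ BalancedTriad G u v w)).card

/-- A signed graph is balanced if every triad is balanced. -/
def IsBalanced {n : ℕ} (G : SignedGraph n) : Prop :=
  ∀ u v w : Fin n, u ≠ v → v ≠ w → u ≠ w → BalancedTriad G u v w

/-- A signed graph is jammed if it is not balanced and every edge `e`
satisfies `2 * r_e < n - 2`. -/
def IsJammed {n : ℕ} (G : SignedGraph n) : Prop :=
  ¬ IsBalanced G ∧ ∀ u v : Fin n, u ≠ v → 2 * rank G u v < n - 2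

/-- Flipping (reversing the sign of) the undirected edge `p`. -/
def flipEdge {n : ℕ} (G : SignedGraph n) (p : Sym2 (Fin n)) : SignedGraph n :=
  fun x y => if s(x, y) = p then !(G x y) else G x y

/-- A CTD-admissible flipEdge: the edge lies in some imbalanced triad and `2 r_e ≥ n - 2`. -/
def CTDAdmissible {n : ℕ} (G : SignedGraph n) (p : Sym2 (Fin n)) : Prop :=
  ∃ u v : Fin n, p = s(u, v) ∧ u ≠ v ∧
    (∃ w, w ≠ u ∧ w ≠ v ∧ ¬ BalancedTriad G u v w) ∧
    n - 2 ≤ 2 * rank G u v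

/-- A BED-admissible flipEdge: there is an imbalanced triad containing the edge
in which the edge has maximal rank. -/
def BEDAdmissible {n : ℕ} (G : SignedGraph n) (p : Sym2 (Fin n)) : Prop :=
  ∃ u v w : Fin n, p = s(u, v) ∧ u ≠ v ∧ w ≠ u ∧ w ≠ v ∧
    ¬ BalancedTriad G u v w ∧
    rank G v w ≤ rank G u v ∧ rank G u w ≤ rank G u v

/-- `FlipSeq Adm G L H`: the list of edges `L` is a sequence of `Adm`-admissible flips
transforming `G` into `H`. -/
inductive FlipSeq {n : ℕ} (Adm : SignedGraph n → Sym2 (Fin n) → Prop) :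
    SignedGraph n → List (Sym2 (Fin n)) → SignedGraph n → Prop
  | nil (G : SignedGraph n) : FlipSeq Adm G [] G
  | cons {G H : SignedGraph n} {L : List (Sym2 (Fin n))} (p : Sym2 (Fin n)) :
      Adm G p → FlipSeq Adm (flipEdge G p) L H → FlipSeq Adm G (p :: L) H

/-- Circular distance between cluster indices. -/
def circDist {m : ℕ} (i j : Fin m) : ℕ := min (i - j : Fin m).val (j - i : Fin m).val

/-- The circular graph: given a cluster assignment `c`, an edge is a friendship iff
its endpoints lie in clusters at circular distance at most `k`. -/
def circular {n m : ℕ} (c : Fin n → Fin m) (k : ℕ) : SignedGraph n :=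
  fun u v => decide (circDist (c u) (c v) ≤ k)

/-- The jammed state `J_n`: three fixed clusters of size `n/3`, friendships inside
clusters, enmities across. -/
def Jn (n : ℕ) : SignedGraph n :=
  fun u v => decide (u.val / (n / 3) = v.val / (n / 3))

/-- The signed graph obtained from `G` by flipping exactly the edges in `F`. -/
def perturb {n : ℕ} (G : SignedGraph n) (F : Finset (Sym2 (Fin n))) : SignedGraph n :=
  fun u v => if s(u, v) ∈ F then !(G u v) else G u v

/-- The set of (undirected, non-diagonal) edges on which two signed graphs differ. -/
def diffEdges {n : ℕ} (G C : SignedGraph n) : Finset (Sym2 (Fin n)) :=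
  univ.filter (fun p => ∃ u v : Fin n, p = s(u, v) ∧ u ≠ v ∧ G u v ≠ C u v)

/-- `C` is a closest balanced state to `G`: `C` is balanced and minimizes the number of
edges on which the signs differ from `G`. -/
def IsClosestBalanced {n : ℕ} (G C : SignedGraph n) : Prop :=
  Symm C ∧ IsBalanced C ∧
    ∀ C' : SignedGraph n, Symm C' → IsBalanced C' →
      (diffEdges G C).card ≤ (diffEdges G C').card

/-- The two sides of the balanced state `B_n`: clusters `0, 1, 5` versus `2, 3, 4`. -/
def sixPart (i : Fin 6) : Bool := decide (i = 0 ∨ i = 1 ∨ i = 5)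

/-- The balanced state `B_n` whose friendship parts are `V₀ ∪ V₁ ∪ V₅` and `V₂ ∪ V₃ ∪ V₄`. -/
def Bgraph {n : ℕ} (c : Fin n → Fin 6) : SignedGraph n :=
  fun u v => sixPart (c u) == sixPart (c v)

/-- The number of good triads containing the red edge `(u,v)`: imbalanced triads in which
the red edge has strictly greater rank than each of the other two edges. -/
def goodCount {n : ℕ} (G : SignedGraph n) (u v : Fin n) : ℕ :=
  (univ.filter (fun w => w ≠ u ∧ w ≠ v ∧ ¬ BalancedTriad G u v w ∧
    rank G v w < rank G u v ∧ rank G u w < rank G u v)).card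

/-- The number of bad triads containing the red edge `(u,v)`: imbalanced triads that
are not good. -/
def badCount {n : ℕ} (G : SignedGraph n) (u v : Fin n) : ℕ :=
  (univ.filter (fun w => w ≠ u ∧ w ≠ v ∧ ¬ BalancedTriad G u v w ∧
    ¬ (rank G v w < rank G u v ∧ rank G u w < rank G u v))).card

/-! In `S_d(n_0, …, n_{4d+1})` the friends of a cluster form an arc of exactly half the cycle, so
shifting a cluster index by `2d + 1` flips its sign with respect to every other cluster. The
balance of `{u, v, w}` only depends on the offsets of the clusters of `v` and `w` from that of
`u`, and the set of offsets giving balanced triads is invariant under that shift: it contains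
`A ∪ (A + (2d + 1))` for one of the arcs `A = [0, d]`, `A = [-d, 0]`, which has `2d + 2`
elements. -/

theorem Fin.val_sub_add_val {m : ℕ} (x s : Fin m) :
    (x - s).val + s.val = x.val ∨ (x - s).val + s.val = x.val + m := by
  rcases le_or_gt s x with h | h
  · left
    rw [Fin.coe_sub_iff_le.mpr h]
    exact Nat.sub_add_cancel h
  · right
    rw [Fin.coe_sub_iff_lt.mpr h]
    have := s.isLt
    omega

section CircDist

variable {m : ℕ} [NeZero m]

theorem circDist_eq_circDist_zero_sub (a b : Fin m) : circDist a b = circDist 0 (b - a) := by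
  unfold circDist
  rw [zero_sub, neg_sub, sub_zero]

theorem circDist_zero_le_iff (x : Fin m) (k : ℕ) :
    circDist 0 x ≤ k ↔ x.val ≤ k ∨ m ≤ x.val + k := by
  unfold circDist
  rw [zero_sub, sub_zero, min_le_iff, Fin.val_neg]
  have := x.isLt
  split_ifs with hx
  · simp [hx]
  · omega

theorem balancedTriad_circular_iff {n : ℕ} (c : Fin n → Fin m) (k : ℕ) (u v w : Fin n) :
    BalancedTriad (circular c k) u v w ↔
      (circDist 0 (c v - c u) ≤ k ↔
        (circDist 0 (c w - c v) ≤ k ↔ circDist 0 (c w - c u) ≤ k)) := by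
  simp only [BalancedTriad, circular, ← circDist_eq_circDist_zero_sub]
  by_cases circDist (c u) (c v) ≤ k <;> by_cases circDist (c v) (c w) ≤ k <;>
    by_cases circDist (c u) (c w) ≤ k <;> simp [*]

end CircDist

theorem le_card_balanced_offsets_of_witness {d : ℕ} (s : Fin (4 * d + 2)) (g : ℕ → ℕ)
    (hg : ∀ i < 2 * d + 2, g i < 4 * d + 2)
    (hinj : ∀ i < 2 * d + 2, ∀ j < 2 * d + 2, g i = g j → i = j)
    (hbal : ∀ i < 2 * d + 2, ∀ y < 4 * d + 2,
      (y + s.val = g i ∨ y + s.val = g i + (4 * d + 2)) →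
      ((s.val ≤ d ∨ 3 * d + 2 ≤ s.val) ↔ ((y ≤ d ∨ 3 * d + 2 ≤ y) ↔ (g i ≤ d ∨ 3 * d + 2 ≤ g i)))) :
    2 * d + 2 ≤ #(univ.filter fun x : Fin (4 * d + 2) =>
      circDist 0 s ≤ d ↔ (circDist 0 (x - s) ≤ d ↔ circDist 0 x ≤ d)) := by
  refine le_card_of_inj_on_range (fun i => if h : i < 2 * d + 2 then ⟨g i, hg i h⟩ else 0)
    (fun i hi => ?_) (fun i hi j hj hij => hinj i hi j hj ?_)
  · simp only [hi, dite_true, mem_filter, mem_univ, true_and, circDist_zero_le_iff]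
    have := hbal i hi _ (Fin.isLt _) (Fin.val_sub_add_val ⟨g i, hg i hi⟩ s)
    omega
  · simpa [hi, hj] using congrArg Fin.val hij

theorem card_balanced_offsets (d : ℕ) (s : Fin (4 * d + 2)) :
    2 * d + 2 ≤ #(univ.filter fun x : Fin (4 * d + 2) =>
      circDist 0 s ≤ d ↔ (circDist 0 (x - s) ≤ d ↔ circDist 0 x ≤ d)) := by
  have := s.isLt
  by_cases hs : s.val ≤ d ∨ (2 * d + 1 ≤ s.val ∧ s.val ≤ 3 * d + 1)
  · -- `[0, d] ∪ [2d + 1, 3d + 1]`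
    refine le_card_balanced_offsets_of_witness s (fun i => if i ≤ d then i else i + d)
      (fun i _ => ?_) (fun i _ j _ hij => ?_) (fun i _ y _ hy => ?_) <;>
      split_ifs at * <;> omega
  · -- `[-d, 0] ∪ [d + 1, 2d + 1]`
    refine le_card_balanced_offsets_of_witness s
      (fun i => if i = 0 then 0 else if i ≤ d + 1 then i + d else i + 2 * d)
      (fun i _ => ?_) (fun i _ j _ hij => ?_) (fun i _ y _ hy => ?_) <;>
      split_ifs at * <;> omega

theorem circular_balanced_clusters_general (d n : ℕ) (c : Fin n → Fin (4 * d + 2))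
    (u v : Fin n) :
    2 * d + 2 ≤ (univ.filter (fun j : Fin (4 * d + 2) =>
      ∀ w : Fin n, c w = j → w ≠ u → w ≠ v →
        BalancedTriad (circular c d) u v w)).card := by
  have : NeZero (4 * d + 2) := ⟨by omega⟩
  refine (card_balanced_offsets d (c v - c u)).trans ?_
  rw [← card_map (addLeftEmbedding (c u))]
  refine card_le_card fun j hj => ?_
  obtain ⟨x, hx, rfl⟩ := mem_map.mp hj
  simp only [mem_filter, mem_univ, true_and] at hx ⊢
  intro w hw _ _
  rw [balancedTriad_circular_iff, hw, addLeftEmbedding_apply, add_sub_cancel_left,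
    show c u + x - c v = x - (c v - c u) by abel]
  exact hx

/-- In the circular graph `S_d(n_0, …, n_{4d+1})`, every edge has at least
`2d + 2` clusters all of whose vertices form a balanced triad with it. -/
theorem circular_balanced_clusters (d n : ℕ) (c : Fin n → Fin (4 * d + 2))
    (hpos : ∀ j : Fin (4 * d + 2), ∃ u : Fin n, c u = j)
    (u v : Fin n) (huv : u ≠ v) :
    2 * d + 2 ≤ (univ.filter (fun j : Fin (4 * d + 2) =>
      ∀ w : Fin n, c w = j → w ≠ u → w ≠ v →
        BalancedTriad (circular c d) u v w)).card :=
  circular_balanced_clusters_general d n c u v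
end

section
/- For every integer d ≥ 1, the circular graph S_d(2, 2, …, 2) with 4d + 2 clusters each of size 2 (hence n = 8d + 4 vertices) is jammed. -/
open Finset

/-! On the cycle of `4d + 2` clusters a ball of radius `d` is exactly half the cycle, so its
complement is the ball of radius `d` around the antipodal cluster. An edge between clusters at
circular distance `s ≤ d` is a friendship, and a triad through it is imbalanced exactly when the
third cluster lies in one of the two balls around its ends but not the other: `2s ≤ 2d` clusters.
An enmity edge `(i, j)` has the same imbalanced triads as the friendship `(i, j + antipode)`.
With two vertices per cluster every edge thus has rank at most `4d < (n - 2) / 2`, while the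
clusters `0`, `d + 1`, `2d + 2` are pairwise far apart and span an all-enmity triad. -/

lemma Fin.val_sub_add_val_eq_or {m : ℕ} (a b : Fin m) :
    (a - b).val + b.val = a.val ∨ (a - b).val + b.val = a.val + m := by
  rcases le_or_gt b a with h | h
  · have := Fin.sub_val_of_le h
    have : b.val ≤ a.val := h
    omega
  · have := Fin.coe_sub_iff_lt.mpr h
    have : a.val < b.val := h
    omega

lemma circDist_le_iff {m k : ℕ} (i j : Fin m) :
    circDist i j ≤ k ↔ (j - i).val ≤ k ∨ m ≤ (j - i).val + k := by
  have := Fin.val_sub_add_val_eq_or i j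
  have := Fin.val_sub_add_val_eq_or j i
  have := (i - j).isLt
  have := (j - i).isLt
  unfold circDist
  omega

lemma circular_id_eq_true_iff {m k : ℕ} (i j : Fin m) :
    circular id k i j = true ↔ (j - i).val ≤ k ∨ m ≤ (j - i).val + k := by
  simp only [circular, id, decide_eq_true_eq, circDist_le_iff]

lemma circular_id_comm {m k : ℕ} (i j : Fin m) : circular id k i j = circular id k j i := by
  unfold circular circDist
  rw [min_comm]

def pullback {n m : ℕ} (H : SignedGraph m) (c : Fin n → Fin m) : SignedGraph n :=
  fun u v => H (c u) (c v)

lemma circular_eq_pullback {n m : ℕ} (c : Fin n → Fin m) (k : ℕ) :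
    circular c k = pullback (circular id k) c := rfl

section Pullback

variable {n m : ℕ} (H : SignedGraph m) (c : Fin n → Fin m)

lemma IsBalanced.of_pullback (hc : Function.Surjective c) (h : IsBalanced (pullback H c)) :
    IsBalanced H := by
  intro i j l hij hjl hil
  obtain ⟨u, rfl⟩ := hc i
  obtain ⟨v, rfl⟩ := hc j
  obtain ⟨w, rfl⟩ := hc l
  exact h u v w (ne_of_apply_ne c hij) (ne_of_apply_ne c hjl) (ne_of_apply_ne c hil)

lemma rank_pullback_le (b : ℕ) (hb : ∀ l, #{u | c u = l} ≤ b) (u v : Fin n) :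
    rank (pullback H c) u v ≤ b * #{l | ¬ BalancedTriad H (c u) (c v) l} := by
  refine card_le_mul_card_image_of_maps_to (f := c) ?_ b fun l _ => ?_
  · intro w hw
    simp only [mem_filter, mem_univ, true_and] at hw ⊢
    exact hw.2.2
  · exact (card_le_card (filter_subset_filter _ (subset_univ _))).trans (hb l)

end Pullback

section HalfCycle

variable {d : ℕ}

def antipode : Fin (4 * d + 2) := ⟨2 * d + 1, by omega⟩

lemma circular_id_add_antipode (j l : Fin (4 * d + 2)) :
    circular id d (j + antipode) l = !circular id d j l := by
  have hsub := Fin.val_sub_add_val_eq_or (l - j) antipode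
  rw [sub_sub] at hsub
  have : (antipode : Fin (4 * d + 2)).val = 2 * d + 1 := rfl
  have := (l - j).isLt
  rw [Bool.eq_not_iff, ne_eq, Bool.eq_iff_iff, circular_id_eq_true_iff, circular_id_eq_true_iff]
  omega

lemma card_circular_id_ne_le_of_val_sub_le (i j : Fin (4 * d + 2)) (h : (j - i).val ≤ d) :
    #{l | circular id d i l ≠ circular id d j l} ≤ 2 * d := by
  calc #{l | circular id d i l ≠ circular id d j l}
      ≤ #(Ioc d (d + (j - i).val) ∪ Ioc (3 * d + 1) (3 * d + 1 + (j - i).val)) := by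
        refine card_le_card_of_injOn (fun l => (l - i).val) (fun l hl => ?_)
          (fun l₁ _ l₂ _ h => sub_left_injective (Fin.ext h))
        have hsub := Fin.val_sub_add_val_eq_or (l - i) (j - i)
        rw [sub_sub_sub_cancel_right] at hsub
        have := (l - i).isLt
        simp only [coe_filter, mem_univ, true_and, Set.mem_ofPred_eq] at hl
        rw [ne_eq, Bool.eq_iff_iff, circular_id_eq_true_iff, circular_id_eq_true_iff] at hl
        simp only [coe_union, coe_Ioc, Set.mem_union, Set.mem_Ioc]
        omega
    _ ≤ 2 * d := by
        refine (card_union_le _ _).trans ?_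
        simp only [Nat.card_Ioc]
        omega

lemma card_circular_id_ne_le (i j : Fin (4 * d + 2)) (h : circular id d i j = true) :
    #{l | circular id d i l ≠ circular id d j l} ≤ 2 * d := by
  simp only [circular, circDist, id, decide_eq_true_eq, min_le_iff] at h
  rcases h with h | h
  · simpa only [ne_comm] using card_circular_id_ne_le_of_val_sub_le j i h
  · exact card_circular_id_ne_le_of_val_sub_le i j h

lemma card_imbalanced_circular_id_le (i j : Fin (4 * d + 2)) :
    #{l | ¬ BalancedTriad (circular id d) i j l} ≤ 2 * d := by
  cases hij : circular id d i j
  · have hfriend : circular id d i (j + antipode) = true := by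
      rw [circular_id_comm, circular_id_add_antipode, circular_id_comm, hij, Bool.not_false]
    convert card_circular_id_ne_le i (j + antipode) hfriend using 4 with l
    simp only [BalancedTriad, hij, circular_id_add_antipode, circular_id_comm j l]
    cases circular id d i l <;> cases circular id d l j <;> decide
  · convert card_circular_id_ne_le i j hij using 4 with l
    simp only [BalancedTriad, hij, circular_id_comm j l]
    cases circular id d i l <;> cases circular id d l j <;> decide

lemma not_isBalanced_circular_id (hd : 1 ≤ d) :
    ¬ IsBalanced (circular (id : Fin (4 * d + 2) → Fin (4 * d + 2)) d) := by
  have far (a b : ℕ) (hab : a ≤ b) (hb : b < 4 * d + 2) (h₁ : d < b - a)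
      (h₂ : b - a < 3 * d + 2) :
      circular id d ⟨a, by omega⟩ ⟨b, hb⟩ = false := by
    rw [Bool.eq_false_iff, ne_eq, circular_id_eq_true_iff, Fin.sub_val_of_le (Fin.mk_le_mk.mpr hab)]
    dsimp only
    omega
  intro h
  have := h ⟨0, by omega⟩ ⟨d + 1, by omega⟩ ⟨2 * d + 2, by omega⟩
    (by simp only [ne_eq, Fin.mk.injEq]; omega) (by simp only [ne_eq, Fin.mk.injEq]; omega)
    (by simp only [ne_eq, Fin.mk.injEq]; omega)
  rw [BalancedTriad, far 0 (d + 1), far (d + 1) (2 * d + 2), far 0 (2 * d + 2)] at this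
    <;> first | exact Bool.false_ne_true this | omega

end HalfCycle

/-- For `d ≥ 1`, the circular graph `S_d(2, 2, …, 2)` with `4d + 2`
clusters of size `2` (hence `n = 8d + 4` vertices) is jammed. -/
theorem circular_two_jammed (d : ℕ) (hd : 1 ≤ d)
    (c : Fin (8 * d + 4) → Fin (4 * d + 2))
    (hsize : ∀ j : Fin (4 * d + 2),
      (univ.filter (fun u : Fin (8 * d + 4) => c u = j)).card = 2) :
    IsJammed (circular c d) := by
  have hc : Function.Surjective c := fun l => by
    obtain ⟨u, hu⟩ := card_pos.mp (hsize l ▸ two_pos)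
    exact ⟨u, (mem_filter.mp hu).2⟩
  rw [circular_eq_pullback]
  refine ⟨fun h => not_isBalanced_circular_id hd (h.of_pullback _ _ hc), fun u v _ => ?_⟩
  have := rank_pullback_le (circular id d) c 2 (fun l => (hsize l).le) u v
  have := card_imbalanced_circular_id_le (c u) (c v)
  omega
end

section
/- For every integer n ≥ 11 and every partition of n vertices into three clusters whose sizes pairwise differ by at most 1, the signed graph in which edges inside a cluster are friendships and edges between different clusters are enmities is jammed. -/
/-!
In the cluster graph a triad is imbalanced exactly when its three vertices lie in three
different clusters. Hence an edge inside a cluster has rank 0, and an edge between two clusters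
has rank equal to the size of the third cluster, which is at most `(n + 2) / 3` when the sizes
differ by at most one; and `2 * ((n + 2) / 3) < n - 2` as soon as `n ≥ 11`.
-/

open Finset

section ClusterGraph

variable {n : ℕ} {α : Type*} [DecidableEq α] (c : Fin n → α)

def clusterGraph : SignedGraph n := fun u v => decide (c u = c v)

theorem balancedTriad_clusterGraph_iff (u v w : Fin n) :
    BalancedTriad (clusterGraph c) u v w ↔ c u = c v ∨ c v = c w ∨ c u = c w := by
  by_cases huv : c u = c v <;> by_cases hvw : c v = c w <;>
    simp_all [BalancedTriad, clusterGraph]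

theorem not_isBalanced_clusterGraph {u v w : Fin n} (huv : c u ≠ c v) (hvw : c v ≠ c w)
    (huw : c u ≠ c w) : ¬ IsBalanced (clusterGraph c) := fun hB => by
  have := hB u v w (ne_of_apply_ne c huv) (ne_of_apply_ne c hvw) (ne_of_apply_ne c huw)
  rw [balancedTriad_clusterGraph_iff] at this
  tauto

theorem rank_clusterGraph_of_eq {u v : Fin n} (huv : c u = c v) :
    rank (clusterGraph c) u v = 0 := by
  simp [rank, balancedTriad_clusterGraph_iff, huv]

theorem rank_clusterGraph_of_ne {u v : Fin n} (huv : c u ≠ c v) :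
    rank (clusterGraph c) u v = #{w | c w ≠ c u ∧ c w ≠ c v} := by
  unfold rank
  congr 1
  ext w
  simp only [mem_filter, mem_univ, true_and, balancedTriad_clusterGraph_iff, huv, false_or,
    not_or]
  constructor
  · rintro ⟨-, -, hvw, huw⟩
    exact ⟨Ne.symm huw, Ne.symm hvw⟩
  · rintro ⟨hwu, hwv⟩
    exact ⟨ne_of_apply_ne c hwu, ne_of_apply_ne c hwv, Ne.symm hwv, Ne.symm hwu⟩

end ClusterGraph

theorem Fin.exists_eq_iff_ne_and_ne_three {a b : Fin 3} (hab : a ≠ b) :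
    ∃ k : Fin 3, ∀ x, x ≠ a ∧ x ≠ b ↔ x = k := by
  revert a b; decide

theorem card_fiber_three_bounds {n : ℕ} (c : Fin n → Fin 3)
    (hbal : ∀ i j : Fin 3, #{u | c u = i} ≤ #{u | c u = j} + 1) (k : Fin 3) :
    3 * #{u | c u = k} ≤ n + 2 ∧ n ≤ 3 * #{u | c u = k} + 2 := by
  have hsum : ∑ i : Fin 3, #{u | c u = i} = n := by
    rw [← card_eq_sum_card_fiberwise fun u _ => mem_univ (c u)]
    simp
  rw [Fin.sum_univ_three] at hsum
  have := hbal 0 1; have := hbal 0 2; have := hbal 1 0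
  have := hbal 1 2; have := hbal 2 0; have := hbal 2 1
  fin_cases k <;> simp <;> omega

/-- For `n ≥ 11`, three clusters whose sizes pairwise differ by at most one,
with friendships inside clusters and enmities across, form a jammed state. -/
theorem three_clusters_jammed (n : ℕ) (hn : 11 ≤ n) (c : Fin n → Fin 3)
    (hbal : ∀ i j : Fin 3,
      (univ.filter (fun u => c u = i)).card ≤ (univ.filter (fun u => c u = j)).card + 1) :
    IsJammed (fun u v => decide (c u = c v)) := by
  change IsJammed (clusterGraph c)
  have hsize := card_fiber_three_bounds c hbal
  have hne : ∀ k, ∃ u, c u = k := fun k => by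
    obtain ⟨u, hu⟩ := card_pos.mp (show 0 < #{u | c u = k} by linarith [(hsize k).2])
    exact ⟨u, (mem_filter.mp hu).2⟩
  obtain ⟨u₀, hu₀⟩ := hne 0
  obtain ⟨u₁, hu₁⟩ := hne 1
  obtain ⟨u₂, hu₂⟩ := hne 2
  refine ⟨not_isBalanced_clusterGraph c (u := u₀) (v := u₁) (w := u₂)
    (by simp [hu₀, hu₁]) (by simp [hu₁, hu₂]) (by simp [hu₀, hu₂]), ?_⟩
  rintro u v -
  by_cases huv : c u = c v
  · rw [rank_clusterGraph_of_eq c huv]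
    omega
  · obtain ⟨k, hk⟩ := Fin.exists_eq_iff_ne_and_ne_three huv
    rw [rank_clusterGraph_of_ne c huv]
    simp only [hk]
    have := hsize k
    omega
end

section
/- Let n ≥ 12 be divisible by 3 and let G be a signed graph on n vertices in which every vertex is incident to at most n/12 − 1 friendship edges. Then there exists a finite sequence of CTD-admissible flips that transforms G into the jammed state J_n. -/
open Finset

/-!
Flip the edges on which `G` differs from `J_n`: first the enmities inside clusters, then the
friendships across clusters, each group in colexicographic order.

When the enmity `uv` inside a cluster is flipped, a triad `uvw` can only be balanced if `w` is a
friend of `u` or `v` or lies strictly between `u` and `v` in their cluster (otherwise `uw` and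
`vw` have both been flipped or both not), so at most `2 (n/12 - 1) + n/3 - 2` of the `n - 2`
triads through `uv` are balanced. When the friendship `uv` across clusters is flipped, every
intra-cluster edge is already a friendship and the enmities across clusters are untouched, so each
enemy of `v` in the cluster of `u`, and vice versa, closes an imbalanced triad: at least
`2 (n/3 - 1 - (n/12 - 1)) = n/2` of them. In both cases `2 r_e ≥ n - 2`.
-/

theorem FlipSeq.append {n : ℕ} {Adm : SignedGraph n → Sym2 (Fin n) → Prop}
    {G H K : SignedGraph n} {L L' : List (Sym2 (Fin n))}
    (h₁ : FlipSeq Adm G L H) (h₂ : FlipSeq Adm H L' K) : FlipSeq Adm G (L ++ L') K := by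
  induction h₁ with
  | nil => exact h₂
  | cons p hp _ ih => exact .cons p hp (ih h₂)

section Perturb

variable {n : ℕ}

theorem perturb_apply (G : SignedGraph n) (F : Finset (Sym2 (Fin n))) (x y : Fin n) :
    perturb G F x y = (G x y ^^ decide (s(x, y) ∈ F)) := by
  unfold perturb
  split_ifs with h <;> simp [h]

theorem perturb_apply_of_notMem {G : SignedGraph n} {F : Finset (Sym2 (Fin n))} {x y : Fin n}
    (h : s(x, y) ∉ F) : perturb G F x y = G x y := by
  simp [perturb_apply, h]

theorem perturb_empty (G : SignedGraph n) : perturb G ∅ = G := by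
  funext x y
  exact perturb_apply_of_notMem (notMem_empty _)

theorem flipEdge_perturb {G : SignedGraph n} {F : Finset (Sym2 (Fin n))} {p : Sym2 (Fin n)}
    (hp : p ∉ F) : flipEdge (perturb G F) p = perturb G (insert p F) := by
  funext x y
  by_cases h : s(x, y) = p
  · subst h
    simp [flipEdge, perturb_apply, hp]
  · simp [flipEdge, perturb_apply, h]

theorem exists_flipSeq_perturb {Adm : SignedGraph n → Sym2 (Fin n) → Prop}
    (G : SignedGraph n) (S : Finset (Sym2 (Fin n))) {κ : Sym2 (Fin n) → ℕ} (hκ : Set.InjOn κ S)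
    (hadm : ∀ p ∈ S, Adm (perturb G {q ∈ S | κ q < κ p}) p) :
    ∃ L, FlipSeq Adm G L (perturb G S) := by
  have upto : ∀ t, ∃ L, FlipSeq Adm G L (perturb G {q ∈ S | κ q < t}) := by
    intro t
    induction t with
    | zero => exact ⟨[], by simpa [perturb_empty] using FlipSeq.nil G⟩
    | succ t ih =>
      obtain ⟨L, hL⟩ := ih
      by_cases ht : ∃ p ∈ S, κ p = t
      · obtain ⟨p, hp, rfl⟩ := ht
        have hinsert : {q ∈ S | κ q < κ p + 1} = insert p {q ∈ S | κ q < κ p} := by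
          ext q
          simp only [mem_filter, mem_insert, Nat.lt_succ_iff_lt_or_eq]
          constructor
          · rintro ⟨hq, hlt | heq⟩
            · exact Or.inr ⟨hq, hlt⟩
            · exact Or.inl (hκ hq hp heq)
          · rintro (rfl | ⟨hq, hlt⟩)
            exacts [⟨hp, Or.inr rfl⟩, ⟨hq, Or.inl hlt⟩]
        refine ⟨L ++ [p], hL.append ?_⟩
        rw [hinsert, ← flipEdge_perturb (by simp)]
        exact .cons p (hadm p hp) (.nil _)
      · have hsame : {q ∈ S | κ q < t + 1} = {q ∈ S | κ q < t} :=
          filter_congr fun q hq => by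
            have : κ q ≠ t := fun h => ht ⟨q, hq, h⟩
            omega
        exact hsame ▸ ⟨L, hL⟩
  obtain ⟨L, hL⟩ := upto (S.sup κ + 1)
  rw [filter_true_of_mem fun q hq => Nat.lt_succ_of_le (le_sup hq)] at hL
  exact ⟨L, hL⟩

theorem mk_mem_diffEdges {G C : SignedGraph n} (hG : Symm G) (hC : Symm C) {a b : Fin n} :
    s(a, b) ∈ diffEdges G C ↔ a ≠ b ∧ G a b ≠ C a b := by
  simp only [diffEdges, mem_filter, mem_univ, true_and, Sym2.eq_iff]
  constructor
  · rintro ⟨x, y, ⟨rfl, rfl⟩ | ⟨rfl, rfl⟩, hxy, h⟩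
    · exact ⟨hxy, h⟩
    · exact ⟨hxy.symm, by rwa [hG, hC]⟩
  · rintro ⟨hab, h⟩
    exact ⟨a, b, Or.inl ⟨rfl, rfl⟩, hab, h⟩

theorem perturb_diffEdges {G C : SignedGraph n} (hG : Symm G) (hC : Symm C) {x y : Fin n}
    (hxy : x ≠ y) : perturb G (diffEdges G C) x y = C x y := by
  by_cases h : G x y = C x y
  · rw [perturb_apply_of_notMem fun hm => ((mk_mem_diffEdges hG hC).mp hm).2 h, h]
  · rw [perturb_apply, decide_eq_true ((mk_mem_diffEdges hG hC).mpr ⟨hxy, h⟩)]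
    revert h
    cases G x y <;> cases C x y <;> decide

end Perturb

section Rank

variable {n : ℕ} {G : SignedGraph n} {u v w : Fin n}

theorem balancedTriad_iff_of_false (h : G u v = false) :
    BalancedTriad G u v w ↔ G v w ≠ G u w := by
  unfold BalancedTriad
  rw [h]
  cases G v w <;> cases G u w <;> decide

theorem balancedTriad_iff_of_true (h : G u v = true) :
    BalancedTriad G u v w ↔ G v w = G u w := by
  unfold BalancedTriad
  rw [h]
  cases G v w <;> cases G u w <;> decide

theorem rank_add_card_balanced (G : SignedGraph n) (huv : u ≠ v) :
    rank G u v + #{w | w ≠ u ∧ w ≠ v ∧ BalancedTriad G u v w} = n - 2 := by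
  have hpair : #{w : Fin n | w ≠ u ∧ w ≠ v} = n - 2 := by
    rw [show ({w | w ≠ u ∧ w ≠ v} : Finset (Fin n)) = {u, v}ᶜ by ext; simp,
      card_compl, card_pair huv, Fintype.card_fin]
  rw [← hpair, ← card_filter_add_card_filter_not (s := {w : Fin n | w ≠ u ∧ w ≠ v})
    (fun w => ¬ BalancedTriad G u v w), rank, filter_filter, filter_filter]
  simp only [not_not, and_assoc]

theorem ctdAdmissible_of_rank (huv : u ≠ v) (hpos : 0 < rank G u v)
    (h : n - 2 ≤ 2 * rank G u v) : CTDAdmissible G s(u, v) := by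
  obtain ⟨w, hw⟩ := card_pos.mp hpos
  simp only [mem_filter, mem_univ, true_and] at hw
  exact ⟨u, v, rfl, huv, ⟨w, hw⟩, h⟩

end Rank

section Clusters

variable {n : ℕ}

def cluster (n : ℕ) (u : Fin n) : ℕ := u.val / (n / 3)

def clusterOf (n : ℕ) (u : Fin n) : Finset (Fin n) := {w | cluster n w = cluster n u}

theorem Jn_apply (a b : Fin n) : Jn n a b = decide (cluster n a = cluster n b) := rfl

theorem Jn_symm : Symm (Jn n) := fun u v => by simp [Jn_apply, eq_comm]

theorem card_clusterOf (h3 : 3 ∣ n) (u : Fin n) : #(clusterOf n u) = n / 3 := by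
  obtain ⟨m, rfl⟩ := h3
  have hm : 0 < m := by have := u.isLt; omega
  have hc : u.val / m * m + m ≤ 3 * m := by
    have : u.val / m < 3 := (Nat.div_lt_iff_lt_mul hm).mpr (by linarith [u.isLt])
    nlinarith
  simp only [clusterOf, cluster, show 3 * m / 3 = m by omega]
  have himage : ({x | x.val / m = u.val / m} : Finset (Fin (3 * m))).map Fin.valEmbedding =
      Ico (u.val / m * m) (u.val / m * m + m) := by
    ext x
    simp only [mem_map, mem_filter, mem_univ, true_and, Fin.valEmbedding_apply, mem_Ico]
    constructor
    · rintro ⟨y, hy, rfl⟩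
      have := (Nat.div_eq_iff hm).mp hy
      omega
    · intro hx
      exact ⟨⟨x, by omega⟩, (Nat.div_eq_iff hm).mpr (by dsimp only; omega), rfl⟩
  rw [← card_map, himage, Nat.card_Ico]
  omega

theorem val_lt_val_add_of_cluster_eq (h3 : 3 ∣ n) {u v : Fin n}
    (h : cluster n u = cluster n v) : v.val < u.val + n / 3 := by
  obtain ⟨m, rfl⟩ := h3
  have hm : 0 < m := by have := u.isLt; omega
  simp only [cluster, show 3 * m / 3 = m by omega] at h ⊢
  have hu := Nat.div_add_mod u.val m
  have hv := Nat.div_add_mod v.val m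
  have := Nat.mod_lt v.val hm
  rw [h] at hu
  omega

end Clusters

section Schedule

variable {n : ℕ}

/-- Intra-cluster edges come first, and each of the two groups is ordered colexicographically. -/
def flipKey (n : ℕ) (p : Sym2 (Fin n)) : ℕ :=
  p.inf.val + (p.sup.val + if cluster n p.inf = cluster n p.sup then 0 else n) * n

theorem flipKey_mod (p : Sym2 (Fin n)) : flipKey n p % n = p.inf.val := by
  rw [flipKey, Nat.add_mul_mod_self_right, Nat.mod_eq_of_lt p.inf.isLt]

theorem flipKey_div_mod (p : Sym2 (Fin n)) : flipKey n p / n % n = p.sup.val := by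
  rw [flipKey, Nat.add_mul_div_right _ _ p.inf.pos, Nat.div_eq_of_lt p.inf.isLt, zero_add]
  split_ifs <;> simp [Nat.mod_eq_of_lt p.sup.isLt]

theorem flipKey_injective : Function.Injective (flipKey n) := fun p q h =>
  Sym2.inf_eq_inf_and_sup_eq_sup.mp
    ⟨Fin.ext (by simpa only [flipKey_mod] using congrArg (· % n) h),
     Fin.ext (by simpa only [flipKey_div_mod] using congrArg (· / n % n) h)⟩

theorem flipKey_mk_of_le {a b : Fin n} (hab : a ≤ b) :
    flipKey n s(a, b) = a + (b + if cluster n a = cluster n b then 0 else n) * n := by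
  simp [flipKey, hab]

theorem flipKey_mk_lt_of_cluster_eq {a b : Fin n} (h : cluster n a = cluster n b) :
    flipKey n s(a, b) < n * n := by
  rcases le_total a b with hab | hba
  · rw [flipKey_mk_of_le hab, if_pos h]
    nlinarith [a.isLt, b.isLt]
  · rw [Sym2.eq_swap, flipKey_mk_of_le hba, if_pos h.symm]
    nlinarith [a.isLt, b.isLt]

theorem le_flipKey_mk_of_cluster_ne {a b : Fin n} (h : cluster n a ≠ cluster n b) :
    n * n ≤ flipKey n s(a, b) := by
  rcases le_total a b with hab | hba
  · rw [flipKey_mk_of_le hab, if_neg h]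
    nlinarith
  · rw [Sym2.eq_swap, flipKey_mk_of_le hba, if_neg (Ne.symm h)]
    nlinarith

theorem flipKey_lt_iff_of_lt_or_lt {u v w : Fin n} (huv : u < v) (hcl : cluster n u = cluster n v)
    (hcw : cluster n w = cluster n u) (hw : w < u ∨ v < w) :
    flipKey n s(u, w) < flipKey n s(u, v) ↔ flipKey n s(v, w) < flipKey n s(u, v) := by
  rw [flipKey_mk_of_le huv.le, if_pos hcl]
  rcases hw with hwu | hvw
  · rw [Sym2.eq_swap, flipKey_mk_of_le hwu.le, if_pos hcw, Sym2.eq_swap,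
      flipKey_mk_of_le (hwu.trans huv).le, if_pos (hcw.trans hcl)]
    refine iff_of_true ?_ ?_ <;> nlinarith [u.isLt, w.isLt, Fin.lt_def.mp huv, Fin.lt_def.mp hwu]
  · rw [flipKey_mk_of_le (huv.trans hvw).le, if_pos hcw.symm, flipKey_mk_of_le hvw.le,
      if_pos (hcl.symm.trans hcw.symm)]
    refine iff_of_false ?_ ?_ <;> nlinarith [u.isLt, v.isLt, Fin.lt_def.mp huv, Fin.lt_def.mp hvw]

def flipsBefore (G : SignedGraph n) (p : Sym2 (Fin n)) : Finset (Sym2 (Fin n)) :=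
  {q ∈ diffEdges G (Jn n) | flipKey n q < flipKey n p}

theorem notMem_flipsBefore_self (G : SignedGraph n) (p : Sym2 (Fin n)) :
    p ∉ flipsBefore G p := by
  simp [flipsBefore]

end Schedule

section Phases

variable {n : ℕ} {G : SignedGraph n} {u v : Fin n}

def friends (G : SignedGraph n) (u : Fin n) : Finset (Fin n) := {v | v ≠ u ∧ G u v = true}

theorem balanced_subset_of_intraEnmity (hG : Symm G) (huv : u < v)
    (hcl : cluster n u = cluster n v) (hGuv : G u v = false) :
    ({w | w ≠ u ∧ w ≠ v ∧ BalancedTriad (perturb G (flipsBefore G s(u, v))) u v w} :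
      Finset (Fin n)) ⊆
      friends G u ∪ friends G v ∪ Ioo u v := by
  set P := flipsBefore G s(u, v)
  intro w hw
  simp only [mem_filter, mem_univ, true_and] at hw
  obtain ⟨hwu, hwv, hbal⟩ := hw
  by_contra hout
  simp only [friends, mem_union, mem_filter, mem_univ, true_and, mem_Ioo, not_or, not_and,
    Bool.not_eq_true] at hout
  obtain ⟨⟨hGuw, hGvw⟩, hbetween⟩ := hout
  replace hGuw : G u w = false := hGuw hwu
  replace hGvw : G v w = false := hGvw hwv
  have hS : s(u, w) ∈ diffEdges G (Jn n) ↔ s(v, w) ∈ diffEdges G (Jn n) := by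
    simp only [mk_mem_diffEdges hG Jn_symm, Jn_apply, hGuw, hGvw, hcl, ne_eq, hwu.symm,
      hwv.symm]
  have hP : s(u, w) ∈ P ↔ s(v, w) ∈ P := by
    simp only [P, flipsBefore, mem_filter]
    rw [← hS]
    refine and_congr_right fun huw => flipKey_lt_iff_of_lt_or_lt huv hcl ?_ ?_
    · by_contra hcw
      simp [mk_mem_diffEdges hG Jn_symm, Jn_apply, hGuw, Ne.symm hcw] at huw
    · rcases lt_or_gt_of_ne hwu with hlt | hgt
      · exact .inl hlt
      · exact .inr (lt_of_le_of_ne (not_lt.mp (hbetween hgt)) (Ne.symm hwv))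
  have hHuv : perturb G P u v = false := by
    rw [perturb_apply_of_notMem (notMem_flipsBefore_self G _), hGuv]
  refine (balancedTriad_iff_of_false hHuv).mp hbal ?_
  rw [perturb_apply, perturb_apply, hGuw, hGvw, decide_eq_decide.mpr hP]

theorem ctdAdmissible_of_intraEnmity (h3 : 3 ∣ n) (hG : Symm G)
    (hdeg : ∀ x, 12 * #(friends G x) + 12 ≤ n) (huv : u < v)
    (hcl : cluster n u = cluster n v) (hGuv : G u v = false) :
    CTDAdmissible (perturb G (flipsBefore G s(u, v))) s(u, v) := by
  have hbal := card_le_card (balanced_subset_of_intraEnmity hG huv hcl hGuv)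
  have hunion₁ := card_union_le (friends G u ∪ friends G v) (Ioo u v)
  have hunion₂ := card_union_le (friends G u) (friends G v)
  have hIoo := Fin.card_Ioo u v
  have hgap := val_lt_val_add_of_cluster_eq h3 hcl
  have hrank := rank_add_card_balanced (perturb G (flipsBefore G s(u, v))) huv.ne
  have hu := hdeg u
  have hv := hdeg v
  have : u.val < v.val := huv
  apply ctdAdmissible_of_rank huv.ne <;> omega

theorem perturb_flipsBefore_of_eq_Jn (hG : Symm G) {p : Sym2 (Fin n)} {x y : Fin n}
    (hxy : G x y = Jn n x y) : perturb G (flipsBefore G p) x y = G x y := by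
  refine perturb_apply_of_notMem fun hmem => ?_
  exact ((mk_mem_diffEdges hG Jn_symm).mp (mem_filter.mp hmem).1).2 hxy

theorem perturb_flipsBefore_of_cluster_eq (hG : Symm G) {p : Sym2 (Fin n)}
    (hp : n * n ≤ flipKey n p) {x y : Fin n} (hxy : x ≠ y) (hcl : cluster n x = cluster n y) :
    perturb G (flipsBefore G p) x y = true := by
  by_cases hGxy : G x y = true
  · rwa [perturb_flipsBefore_of_eq_Jn hG (by rw [hGxy, Jn_apply, decide_eq_true hcl])]
  · have hmem : s(x, y) ∈ flipsBefore G p := mem_filter.mpr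
      ⟨(mk_mem_diffEdges hG Jn_symm).mpr ⟨hxy, by simp [Jn_apply, hcl, hGxy]⟩,
        (flipKey_mk_lt_of_cluster_eq hcl).trans_le hp⟩
    simpa [perturb_apply, hmem] using hGxy

theorem not_balancedTriad_of_interFriendship (hG : Symm G) (hcl : cluster n u ≠ cluster n v)
    (hGuv : G u v = true) {w : Fin n}
    (hw : cluster n w = cluster n u ∧ w ≠ u ∧ G v w = false ∨
      cluster n w = cluster n v ∧ w ≠ v ∧ G u w = false) :
    ¬ BalancedTriad (perturb G (flipsBefore G s(u, v))) u v w := by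
  have hkey := le_flipKey_mk_of_cluster_ne hcl
  have hHuv : perturb G (flipsBefore G s(u, v)) u v = true := by
    rw [perturb_apply_of_notMem (notMem_flipsBefore_self G _), hGuv]
  rw [balancedTriad_iff_of_true hHuv]
  rcases hw with ⟨hw, hwu, hGvw⟩ | ⟨hw, hwv, hGuw⟩
  · have hvw : cluster n v ≠ cluster n w := fun h => hcl (h.trans hw).symm
    rw [perturb_flipsBefore_of_cluster_eq hG hkey (Ne.symm hwu) hw.symm,
      perturb_flipsBefore_of_eq_Jn hG (by rw [hGvw, Jn_apply, decide_eq_false hvw]), hGvw]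
    decide
  · have huw : cluster n u ≠ cluster n w := fun h => hcl (h.trans hw)
    rw [perturb_flipsBefore_of_cluster_eq hG hkey (Ne.symm hwv) hw.symm,
      perturb_flipsBefore_of_eq_Jn hG (by rw [hGuw, Jn_apply, decide_eq_false huw]), hGuw]
    decide

theorem le_card_clusterOf_sdiff_friends (h3 : 3 ∣ n) (G : SignedGraph n) (a b : Fin n) :
    n / 3 - 1 - #(friends G b) ≤ #(clusterOf n a \ insert a (friends G b)) := by
  have hsdiff := le_card_sdiff (insert a (friends G b)) (clusterOf n a)
  have hinsert := card_insert_le a (friends G b)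
  rw [card_clusterOf h3] at hsdiff
  omega

theorem le_rank_of_interFriendship (h3 : 3 ∣ n) (hG : Symm G) (hcl : cluster n u ≠ cluster n v)
    (hGuv : G u v = true) :
    (n / 3 - 1 - #(friends G v)) + (n / 3 - 1 - #(friends G u)) ≤
      rank (perturb G (flipsBefore G s(u, v))) u v := by
  set A := clusterOf n u \ insert u (friends G v)
  set B := clusterOf n v \ insert v (friends G u)
  have side : ∀ {a b w : Fin n}, cluster n a ≠ cluster n b →
      w ∈ (clusterOf n a \ insert a (friends G b)) →
      cluster n w = cluster n a ∧ w ≠ a ∧ w ≠ b ∧ G b w = false := by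
    intro a b w hab hw
    simp only [clusterOf, friends, mem_sdiff, mem_filter, mem_univ, true_and, mem_insert,
      not_or, not_and, Bool.not_eq_true] at hw
    obtain ⟨hcw, hwa, hGbw⟩ := hw
    have hwb : w ≠ b := by rintro rfl; exact hab hcw.symm
    exact ⟨hcw, hwa, hwb, hGbw hwb⟩
  have hdisj : Disjoint A B := disjoint_left.mpr fun w hA hB =>
    hcl ((side hcl hA).1.symm.trans (side (Ne.symm hcl) hB).1)
  have hsub : A ∪ B ⊆ ({w | w ≠ u ∧ w ≠ v ∧
      ¬ BalancedTriad (perturb G (flipsBefore G s(u, v))) u v w} : Finset (Fin n)) := by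
    intro w hw
    rw [mem_filter]
    refine ⟨mem_univ w, ?_⟩
    rcases mem_union.mp hw with hA | hB
    · obtain ⟨hcw, hwu, hwv, hGvw⟩ := side hcl hA
      exact ⟨hwu, hwv,
        not_balancedTriad_of_interFriendship hG hcl hGuv (.inl ⟨hcw, hwu, hGvw⟩)⟩
    · obtain ⟨hcw, hwv, hwu, hGuw⟩ := side (Ne.symm hcl) hB
      exact ⟨hwu, hwv,
        not_balancedTriad_of_interFriendship hG hcl hGuv (.inr ⟨hcw, hwv, hGuw⟩)⟩
  calc _ ≤ #A + #B := add_le_add (le_card_clusterOf_sdiff_friends h3 G u v)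
        (le_card_clusterOf_sdiff_friends h3 G v u)
    _ = #(A ∪ B) := (card_union_of_disjoint hdisj).symm
    _ ≤ _ := card_le_card hsub

theorem ctdAdmissible_of_interFriendship (h3 : 3 ∣ n) (hG : Symm G)
    (hdeg : ∀ x, 12 * #(friends G x) + 12 ≤ n) (huv : u ≠ v)
    (hcl : cluster n u ≠ cluster n v) (hGuv : G u v = true) :
    CTDAdmissible (perturb G (flipsBefore G s(u, v))) s(u, v) := by
  have hrank := le_rank_of_interFriendship h3 hG hcl hGuv
  have hu := hdeg u
  have hv := hdeg v
  apply ctdAdmissible_of_rank huv <;> omega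

theorem ctdAdmissible_of_mem_diffEdges (h3 : 3 ∣ n) (hG : Symm G)
    (hdeg : ∀ x, 12 * #(friends G x) + 12 ≤ n) {p : Sym2 (Fin n)}
    (hp : p ∈ diffEdges G (Jn n)) : CTDAdmissible (perturb G (flipsBefore G p)) p := by
  induction p using Sym2.ind with
  | _ a b =>
    obtain ⟨hab, hdiff⟩ := (mk_mem_diffEdges hG Jn_symm).mp hp
    by_cases hcl : cluster n a = cluster n b
    · have hGab : G a b = false := by simpa [Jn_apply, hcl] using hdiff
      rcases lt_or_gt_of_ne hab with hlt | hgt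
      · exact ctdAdmissible_of_intraEnmity h3 hG hdeg hlt hcl hGab
      · rw [Sym2.eq_swap]
        exact ctdAdmissible_of_intraEnmity h3 hG hdeg hgt hcl.symm (hG a b ▸ hGab)
    · have hGab : G a b = true := by simpa [Jn_apply, hcl] using hdiff
      exact ctdAdmissible_of_interFriendship h3 hG hdeg hab hcl hGab

end Phases


theorem ctd_reaches_jammed_general (n : ℕ) (h3 : 3 ∣ n)
    (G : SignedGraph n) (hG : Symm G)
    (hdeg : ∀ u : Fin n,
      (((univ.filter (fun v => v ≠ u ∧ G u v = true)).card : ℝ)) ≤ (n : ℝ) / 12 - 1) :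
    ∃ L : List (Sym2 (Fin n)), ∃ H : SignedGraph n,
      FlipSeq CTDAdmissible G L H ∧ ∀ u v : Fin n, u ≠ v → H u v = Jn n u v := by
  have hdeg' : ∀ x, 12 * #(friends G x) + 12 ≤ n := fun x => by
    have h := hdeg x
    exact_mod_cast
      (by unfold friends; push_cast; linarith : ((12 * #(friends G x) + 12 : ℕ) : ℝ) ≤ n)
  obtain ⟨L, hL⟩ := exists_flipSeq_perturb G (diffEdges G (Jn n)) flipKey_injective.injOn
    fun p hp => ctdAdmissible_of_mem_diffEdges h3 hG hdeg' hp
  exact ⟨L, _, hL, fun u v huv => perturb_diffEdges hG Jn_symm huv⟩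

/-- From any signed graph on `n ≥ 12` vertices (`3 ∣ n`) in which every vertex
has at most `n/12 - 1` friendships, some sequence of CTD-admissible flips reaches `J_n`. -/
theorem ctd_reaches_jammed (n : ℕ) (hn : 12 ≤ n) (h3 : 3 ∣ n)
    (G : SignedGraph n) (hG : Symm G)
    (hdeg : ∀ u : Fin n,
      (((univ.filter (fun v => v ≠ u ∧ G u v = true)).card : ℝ)) ≤ (n : ℝ) / 12 - 1) :
    ∃ L : List (Sym2 (Fin n)), ∃ H : SignedGraph n,
      FlipSeq CTDAdmissible G L H ∧ ∀ u v : Fin n, u ≠ v → H u v = Jn n u v :=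
  ctd_reaches_jammed_general n h3 G hG hdeg
end

section
/- Let n be divisible by 3 and let E_0 be a set of edges of the complete graph on the n vertices of J_n such that every vertex is incident to at most n/12 − 1 edges of E_0. For every subset F ⊆ E_0, consider the signed graph G_F obtained from J_n by flipping exactly the edges in F. Then: (a) every edge not in F is contained in at least n/2 balanced triads of G_F (and hence has rank at most n/2 − 2 in G_F); and (b) every edge in F has rank at least n/2 in G_F. -/
open Finset

/-!
In `J_n` an edge `uv` is imbalanced only with a third vertex `w` from the cluster containing
neither endpoint, so its rank is at most `n/3`. Flipping the edges of `F` changes the balance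
of the triad `{u,v,w}` exactly when an odd number of its edges lie in `F`; apart from the
`≤ n/6 - 2` vertices `w` joined to `u` or `v` by an edge of `F`, this happens exactly when
`uv ∈ F`. Hence an unflipped edge keeps rank `≤ n/3 + n/6 - 2`, and a flipped edge turns its
`≥ 2n/3 - 2` balanced triads into imbalanced ones, losing at most `n/6 - 2` of them.
-/

section Counting

variable {n : ℕ}

def balancedCount (G : SignedGraph n) (u v : Fin n) : ℕ :=
  (univ.filter (fun w => w ≠ u ∧ w ≠ v ∧ BalancedTriad G u v w)).card

lemma card_filter_ne_ne_add_two {u v : Fin n} (huv : u ≠ v) :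
    (univ.filter (fun w : Fin n => w ≠ u ∧ w ≠ v)).card + 2 = n := by
  have h : univ.filter (fun w : Fin n => w ≠ u ∧ w ≠ v) = univ \ {u, v} := by
    ext w; simp [not_or]
  rw [h, ← card_pair huv, card_sdiff_add_card_eq_card (subset_univ _), card_univ,
    Fintype.card_fin]

lemma balancedCount_add_rank (G : SignedGraph n) {u v : Fin n} (huv : u ≠ v) :
    balancedCount G u v + rank G u v + 2 = n := by
  have hsplit := card_filter_add_card_filter_not (s := univ.filter fun w : Fin n => w ≠ u ∧ w ≠ v)
    (fun w => BalancedTriad G u v w)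
  simp only [filter_filter, and_assoc] at hsplit
  rw [balancedCount, rank, hsplit, card_filter_ne_ne_add_two huv]

end Counting

section Perturbation

variable {n : ℕ} (F : Finset (Sym2 (Fin n)))

def touched (u v : Fin n) : Finset (Fin n) :=
  univ.filter (fun w => s(u, w) ∈ F ∨ s(v, w) ∈ F)

lemma card_filter_mk_mem_le {E : Finset (Sym2 (Fin n))} (hF : F ⊆ E) (u : Fin n) :
    (univ.filter (fun w => s(u, w) ∈ F)).card ≤ (E.filter (fun p => u ∈ p)).card :=
  card_le_card_of_injOn (fun w => s(u, w))
    (fun w hw => mem_filter.mpr ⟨hF (mem_filter.mp hw).2, Sym2.mem_mk_left u w⟩)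
    (fun _ _ _ _ h => Sym2.congr_right.mp h)

lemma card_touched_le {E : Finset (Sym2 (Fin n))} (hF : F ⊆ E) (u v : Fin n) :
    (touched F u v).card ≤
      (E.filter (fun p => u ∈ p)).card + (E.filter (fun p => v ∈ p)).card := by
  rw [touched, filter_or]
  exact (card_union_le _ _).trans
    (add_le_add (card_filter_mk_mem_le F hF u) (card_filter_mk_mem_le F hF v))

lemma balancedTriad_perturb_iff (G : SignedGraph n) {u v w : Fin n} (hw : w ∉ touched F u v) :
    BalancedTriad (perturb G F) u v w ↔ (BalancedTriad G u v w ↔ s(u, v) ∉ F) := by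
  simp only [touched, mem_filter, mem_univ, true_and, not_or] at hw
  simp only [BalancedTriad, perturb, if_neg hw.1, if_neg hw.2]
  split_ifs <;> cases G u v <;> cases G v w <;> cases G u w <;> simp_all

lemma rank_perturb_le (G : SignedGraph n) {u v : Fin n} (huv : s(u, v) ∉ F) :
    rank (perturb G F) u v ≤ rank G u v + (touched F u v).card := by
  refine (card_le_card fun w hw => ?_).trans (card_union_le _ _)
  by_cases hwt : w ∈ touched F u v
  · exact mem_union_right _ hwt
  · simp only [mem_filter, mem_univ, true_and, balancedTriad_perturb_iff F G hwt,
      huv, not_false_eq_true, iff_true] at hw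
    exact mem_union_left _ (mem_filter.mpr ⟨mem_univ w, hw⟩)

lemma balancedCount_le_rank_perturb (G : SignedGraph n) {u v : Fin n} (huv : s(u, v) ∈ F) :
    balancedCount G u v ≤ rank (perturb G F) u v + (touched F u v).card := by
  refine (card_le_card fun w hw => ?_).trans (card_union_le _ _)
  by_cases hwt : w ∈ touched F u v
  · exact mem_union_right _ hwt
  · simp only [mem_filter, mem_univ, true_and] at hw
    simp only [mem_union, mem_filter, mem_univ, true_and, balancedTriad_perturb_iff F G hwt,
      huv, not_true_eq_false, iff_false]
    exact Or.inl ⟨hw.1, hw.2.1, not_not.mpr hw.2.2⟩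

end Perturbation

section Jn

lemma card_filter_div_eq_le {n m : ℕ} (hm : 0 < m) (k : ℕ) :
    (univ.filter (fun w : Fin n => w.val / m = k)).card ≤ m := by
  calc (univ.filter (fun w : Fin n => w.val / m = k)).card ≤ (range m).card :=
        card_le_card_of_injOn (fun w => w.val % m)
          (fun w _ => by simpa using Nat.mod_lt _ hm)
          (fun a ha b hb hab => Fin.ext <| by
            rw [← Nat.div_add_mod a.val m, ← Nat.div_add_mod b.val m, (mem_filter.mp ha).2,
              (mem_filter.mp hb).2, show a.val % m = b.val % m from hab])
    _ = m := card_range m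

lemma Jn_three_mul (m : ℕ) (u v : Fin (3 * m)) :
    Jn (3 * m) u v = decide (u.val / m = v.val / m) := by
  rw [Jn, Nat.mul_div_cancel_left m three_pos]

/-- The three cluster indices of an imbalanced triad of `J_n` are `0, 1, 2` in some order. -/
lemma cluster_eq_of_not_balancedTriad_Jn {m : ℕ} {u v w : Fin (3 * m)}
    (h : ¬ BalancedTriad (Jn (3 * m)) u v w) :
    w.val / m = 3 - u.val / m - v.val / m := by
  have hu : u.val / m < 3 := Nat.div_lt_of_lt_mul (by linarith [u.isLt])
  have hv : v.val / m < 3 := Nat.div_lt_of_lt_mul (by linarith [v.isLt])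
  have hw : w.val / m < 3 := Nat.div_lt_of_lt_mul (by linarith [w.isLt])
  simp only [BalancedTriad, Jn_three_mul] at h
  generalize u.val / m = a at *
  generalize v.val / m = b at *
  generalize w.val / m = c at *
  interval_cases a <;> interval_cases b <;> interval_cases c <;> simp_all

lemma rank_Jn_le (m : ℕ) (u v : Fin (3 * m)) : rank (Jn (3 * m)) u v ≤ m := by
  rcases Nat.eq_zero_or_pos m with rfl | hm
  · exact absurd u.isLt (by simp)
  refine (card_le_card fun w hw => ?_).trans
    (card_filter_div_eq_le hm (3 - u.val / m - v.val / m))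
  simp only [mem_filter, mem_univ, true_and] at hw ⊢
  exact cluster_eq_of_not_balancedTriad_Jn hw.2.2

end Jn

theorem perturbed_Jn_ranks_general (n : ℕ) (h3 : 3 ∣ n) (E0 : Finset (Sym2 (Fin n)))
    (hdeg : ∀ u : Fin n, ((E0.filter (fun p => u ∈ p)).card : ℝ) ≤ (n : ℝ) / 12 - 1)
    (F : Finset (Sym2 (Fin n))) (hF : F ⊆ E0) :
    (∀ u v : Fin n, u ≠ v → s(u, v) ∉ F →
      (n : ℝ) / 2 ≤ ((univ.filter (fun w => w ≠ u ∧ w ≠ v ∧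
          BalancedTriad (perturb (Jn n) F) u v w)).card : ℝ) ∧
      (rank (perturb (Jn n) F) u v : ℝ) ≤ (n : ℝ) / 2 - 2) ∧
    (∀ u v : Fin n, u ≠ v → s(u, v) ∈ F →
      (n : ℝ) / 2 ≤ (rank (perturb (Jn n) F) u v : ℝ)) := by
  obtain ⟨m, rfl⟩ := h3
  have htouched (u v : Fin (3 * m)) : ((touched F u v).card : ℝ) ≤ (3 * m : ℕ) / 6 - 2 := by
    have : ((touched F u v).card : ℝ) ≤
        (E0.filter (fun p => u ∈ p)).card + (E0.filter (fun p => v ∈ p)).card :=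
      mod_cast card_touched_le F hF u v
    linarith [hdeg u, hdeg v]
  have hJ (u v : Fin (3 * m)) : (rank (Jn (3 * m)) u v : ℝ) ≤ (3 * m : ℕ) / 3 := by
    have : (rank (Jn (3 * m)) u v : ℝ) ≤ m := mod_cast rank_Jn_le m u v
    push_cast
    linarith
  have hsum (G : SignedGraph (3 * m)) {u v : Fin (3 * m)} (huv : u ≠ v) :
      (balancedCount G u v : ℝ) + rank G u v + 2 = (3 * m : ℕ) :=
    mod_cast balancedCount_add_rank G huv
  refine ⟨fun u v huv huvF => ?_, fun u v huv huvF => ?_⟩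
  · have hr : (rank (perturb (Jn (3 * m)) F) u v : ℝ) ≤
        rank (Jn (3 * m)) u v + (touched F u v).card :=
      mod_cast rank_perturb_le F (Jn (3 * m)) huvF
    have := hsum (perturb (Jn (3 * m)) F) huv
    constructor
    · change _ ≤ (balancedCount (perturb (Jn (3 * m)) F) u v : ℝ)
      linarith [htouched u v, hJ u v]
    · linarith [htouched u v, hJ u v]
  · have hb : (balancedCount (Jn (3 * m)) u v : ℝ) ≤
        rank (perturb (Jn (3 * m)) F) u v + (touched F u v).card :=
      mod_cast balancedCount_le_rank_perturb F (Jn (3 * m)) huvF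
    linarith [hsum (Jn (3 * m)) huv, htouched u v, hJ u v]

/-- Perturbing `J_n` by any subset `F` of a sparse edge set `E_0`:
(a) every edge not in `F` lies in at least `n/2` balanced triads (hence has rank at most
`n/2 - 2`); (b) every edge in `F` has rank at least `n/2`. -/
theorem perturbed_Jn_ranks (n : ℕ) (h3 : 3 ∣ n) (E0 : Finset (Sym2 (Fin n)))
    (hE0 : ∀ p ∈ E0, ¬ p.IsDiag)
    (hdeg : ∀ u : Fin n, ((E0.filter (fun p => u ∈ p)).card : ℝ) ≤ (n : ℝ) / 12 - 1)
    (F : Finset (Sym2 (Fin n))) (hF : F ⊆ E0) :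
    (∀ u v : Fin n, u ≠ v → s(u, v) ∉ F →
      (n : ℝ) / 2 ≤ ((univ.filter (fun w => w ≠ u ∧ w ≠ v ∧
          BalancedTriad (perturb (Jn n) F) u v w)).card : ℝ) ∧
      (rank (perturb (Jn n) F) u v : ℝ) ≤ (n : ℝ) / 2 - 2) ∧
    (∀ u v : Fin n, u ≠ v → s(u, v) ∈ F →
      (n : ℝ) / 2 ≤ (rank (perturb (Jn n) F) u v : ℝ)) :=
  perturbed_Jn_ranks_general n h3 E0 hdeg F hF
end

section
/- Let G be a signed graph on n vertices, let C be a closest balanced state to G, and call an edge red if G and C assign it different signs. Suppose every vertex is incident to at most n/4 − 1 red edges. Then in every imbalanced triad of G that contains exactly one red edge, the red edge has strictly greater rank than each of the other two edges; consequently, in every imbalanced triad of G, every edge of maximal rank within that triad is red. -/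
open Finset

/-!
Compare `G` with the balanced state `C`. In any triad the signs of `C` multiply to `+1`, so a
triad of `G` is imbalanced exactly when it has an odd number of red edges. Hence every
imbalanced triad on a black edge `xy` has a red edge at `x` or at `y`, giving
`r_xy ≤ d_x + d_y`, where `d` is the red degree; and every triad on a red edge `uv` whose other
two edges are both red or both black is imbalanced, giving `r_uv ≥ n - 2 - d_u - d_v`. With
`d ≤ n/4 - 1` everywhere, every red edge outranks every black edge, which yields both claims.
-/

section RedEdges

variable {n : ℕ} {G C : SignedGraph n} {u v w : Fin n}

def redNeighbors (G C : SignedGraph n) (u : Fin n) : Finset (Fin n) :=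
  univ.filter (fun v => v ≠ u ∧ G u v ≠ C u v)

@[simp]
lemma mem_redNeighbors : w ∈ redNeighbors G C u ↔ w ≠ u ∧ G u w ≠ C u w := by
  simp [redNeighbors]

lemma not_balancedTriad_iff_of_balancedTriad (hC : BalancedTriad C u v w) :
    ¬ BalancedTriad G u v w ↔ (G u v ≠ C u v ↔ (G v w ≠ C v w ↔ G u w ≠ C u w)) := by
  revert hC
  unfold BalancedTriad
  generalize G u v = a, G v w = b, G u w = c, C u v = a', C v w = b', C u w = c'
  decide +revert

lemma rank_le_of_black (hC : IsBalanced C) (huv : u ≠ v) (hblack : G u v = C u v) :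
    rank G u v ≤ #(redNeighbors G C u) + #(redNeighbors G C v) := by
  refine (card_le_card fun w hw => ?_).trans (card_union_le _ _)
  obtain ⟨hwu, hwv, himb⟩ : w ≠ u ∧ w ≠ v ∧ ¬ BalancedTriad G u v w := by
    simpa using hw
  have hparity :=
    (not_balancedTriad_iff_of_balancedTriad (hC u v w huv hwv.symm hwu.symm)).1 himb
  simp only [mem_union, mem_redNeighbors]
  tauto

lemma sub_two_le_rank_add_of_red (hC : IsBalanced C) (huv : u ≠ v) (hred : G u v ≠ C u v) :
    n - 2 ≤ rank G u v + (#(redNeighbors G C u) + #(redNeighbors G C v)) := by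
  have hcover : ({u, v}ᶜ : Finset (Fin n)) ⊆
      univ.filter (fun w => w ≠ u ∧ w ≠ v ∧ ¬ BalancedTriad G u v w) ∪
        (redNeighbors G C u ∪ redNeighbors G C v) := by
    intro w hw
    obtain ⟨hwu, hwv⟩ : w ≠ u ∧ w ≠ v := by simpa [not_or] using hw
    have hparity := not_balancedTriad_iff_of_balancedTriad (G := G)
      (hC u v w huv hwv.symm hwu.symm)
    simp only [mem_union, mem_filter, mem_univ, true_and, mem_redNeighbors]
    tauto
  calc n - 2 = #({u, v}ᶜ : Finset (Fin n)) := by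
        rw [card_compl, card_pair huv, Fintype.card_fin]
    _ ≤ _ := card_le_card hcover
    _ ≤ _ := (card_union_le _ _).trans (Nat.add_le_add_left (card_union_le _ _) _)

lemma rank_lt_rank_of_red_of_black {x y : Fin n} (hC : IsBalanced C)
    (hdeg : ∀ z, 4 * #(redNeighbors G C z) + 4 ≤ n)
    (huv : u ≠ v) (hred : G u v ≠ C u v) (hxy : x ≠ y) (hblack : G x y = C x y) :
    rank G x y < rank G u v := by
  have hlower := sub_two_le_rank_add_of_red hC huv hred
  have hupper := rank_le_of_black hC hxy hblack
  have := hdeg u; have := hdeg v; have := hdeg x; have := hdeg y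
  omega

end RedEdges

theorem red_flipped_degree_general (n : ℕ) (G C : SignedGraph n)
    (hC : IsClosestBalanced G C)
    (hdeg : ∀ u : Fin n,
      ((univ.filter (fun v => v ≠ u ∧ G u v ≠ C u v)).card : ℝ) ≤ (n : ℝ) / 4 - 1) :
    (∀ u v w : Fin n, u ≠ v → w ≠ u → w ≠ v → ¬ BalancedTriad G u v w →
      G u v ≠ C u v → G v w = C v w → G u w = C u w →
      rank G v w < rank G u v ∧ rank G u w < rank G u v) ∧
    (∀ u v w : Fin n, u ≠ v → w ≠ u → w ≠ v → ¬ BalancedTriad G u v w →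
      rank G v w ≤ rank G u v → rank G u w ≤ rank G u v → G u v ≠ C u v) := by
  obtain ⟨-, hCb, -⟩ := hC
  have hdeg' (z : Fin n) : 4 * #(redNeighbors G C z) + 4 ≤ n := by
    have hz : (#(redNeighbors G C z) : ℝ) ≤ n / 4 - 1 := hdeg z
    have : (4 * #(redNeighbors G C z) + 4 : ℝ) ≤ n := by linarith
    exact_mod_cast this
  refine ⟨fun u v w huv hwu hwv _ hred hvw huw =>
    ⟨rank_lt_rank_of_red_of_black hCb hdeg' huv hred hwv.symm hvw,
     rank_lt_rank_of_red_of_black hCb hdeg' huv hred hwu.symm huw⟩, ?_⟩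
  intro u v w huv hwu hwv himb hvw_le huw_le hblack
  have hparity :=
    (not_balancedTriad_iff_of_balancedTriad (hCb u v w huv hwv.symm hwu.symm)).1 himb
  by_cases hvw : G v w ≠ C v w
  · exact (rank_lt_rank_of_red_of_black hCb hdeg' hwv.symm hvw huv hblack).not_ge hvw_le
  · have huw : G u w ≠ C u w := by tauto
    exact (rank_lt_rank_of_red_of_black hCb hdeg' hwu.symm huw huv hblack).not_ge huw_le

/-- If every vertex is incident to at most `n/4 - 1` red edges, then in every
imbalanced triad with exactly one red edge the red edge has strictly greater rank than the
other two edges; consequently every maximal-rank edge of an imbalanced triad is red. -/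
theorem red_flipped_degree (n : ℕ) (G C : SignedGraph n) (hG : Symm G)
    (hC : IsClosestBalanced G C)
    (hdeg : ∀ u : Fin n,
      ((univ.filter (fun v => v ≠ u ∧ G u v ≠ C u v)).card : ℝ) ≤ (n : ℝ) / 4 - 1) :
    (∀ u v w : Fin n, u ≠ v → w ≠ u → w ≠ v → ¬ BalancedTriad G u v w →
      G u v ≠ C u v → G v w = C v w → G u w = C u w →
      rank G v w < rank G u v ∧ rank G u w < rank G u v) ∧
    (∀ u v w : Fin n, u ≠ v → w ≠ u → w ≠ v → ¬ BalancedTriad G u v w →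
      rank G v w ≤ rank G u v → rank G u w ≤ rank G u v → G u v ≠ C u v) :=
  red_flipped_degree_general n G C hC hdeg
end

section
/- Let G be a signed graph on n vertices, let C be a closest balanced state to G, and call an edge red if G and C assign it different signs. Suppose the set of vertices incident to at least one red edge has size at most n/2. Then in every imbalanced triad of G that contains exactly one red edge, the red edge has strictly greater rank than each of the other two edges; consequently, in every imbalanced triad of G, every edge of maximal rank within that triad is red. -/
open Finset

/-!
Let `R` be the set of vertices incident to a red edge. Since `C` is balanced, a triad whose
edges are all black is balanced. Hence every imbalanced triad through a black edge `vw` has its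
third vertex in `R \ {v}`, so `rank G v w ≤ |R| - 1`; and a red edge `uv` forms an imbalanced
triad with every vertex outside `R`, so `rank G u v ≥ n - |R|`. When `2|R| ≤ n` the red edge
therefore outranks every black edge that shares an endpoint with it.
-/

def redVertices {n : ℕ} (G C : SignedGraph n) : Finset (Fin n) :=
  univ.filter fun u => ∃ v, v ≠ u ∧ G u v ≠ C u v

section

variable {n : ℕ} {G C : SignedGraph n}

lemma mem_redVertices {u : Fin n} : u ∈ redVertices G C ↔ ∃ v, v ≠ u ∧ G u v ≠ C u v := by
  simp [redVertices]

lemma Symm.ne_symm (hG : Symm G) (hC : Symm C) {u v : Fin n} (h : G u v ≠ C u v) :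
    G v u ≠ C v u := by
  rwa [hG, hC] at h

lemma Symm.eq_symm (hG : Symm G) (hC : Symm C) {u v : Fin n} (h : G u v = C u v) :
    G v u = C v u := by
  rwa [hG, hC] at h

lemma agree_of_not_mem_redVertices (hG : Symm G) (hC : Symm C) {x y : Fin n}
    (hx : x ∉ redVertices G C) (hyx : y ≠ x) : G y x = C y x :=
  hG.eq_symm hC <| not_not.mp fun h => hx (mem_redVertices.mpr ⟨y, hyx, h⟩)

lemma balancedTriad_swap (hG : Symm G) (u v w : Fin n) :
    BalancedTriad G v u w ↔ BalancedTriad G u v w := by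
  unfold BalancedTriad
  rw [hG v u, Bool.xor_comm (G v w) (G u w)]

lemma rank_comm (hG : Symm G) (u v : Fin n) : rank G u v = rank G v u := by
  unfold rank
  congr 1
  ext x
  simp only [mem_filter, mem_univ, true_and, balancedTriad_swap hG u v x]
  tauto

lemma BalancedTriad.of_agree {u v w : Fin n} (hC : BalancedTriad C u v w)
    (huv : G u v = C u v) (hvw : G v w = C v w) (huw : G u w = C u w) :
    BalancedTriad G u v w := by
  rwa [BalancedTriad, huv, hvw, huw]

lemma BalancedTriad.not_of_disagree_one {u v w : Fin n} (hC : BalancedTriad C u v w)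
    (huv : G u v ≠ C u v) (hvw : G v w = C v w) (huw : G u w = C u w) :
    ¬ BalancedTriad G u v w := by
  unfold BalancedTriad at *
  rw [Bool.eq_not_of_ne huv, hvw, huw]
  revert hC
  cases C u v <;> cases C v w <;> cases C u w <;> decide

lemma rank_le_card_erase_redVertices (hG : Symm G) (hC : Symm C) (hCb : IsBalanced C)
    {v w : Fin n} (hvw : v ≠ w) (hblack : G v w = C v w) :
    rank G v w ≤ ((redVertices G C).erase v).card := by
  refine card_le_card fun x hx => ?_
  obtain ⟨hxv, hxw, himb⟩ : x ≠ v ∧ x ≠ w ∧ ¬ BalancedTriad G v w x := by simpa using hx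
  refine mem_erase.mpr ⟨hxv, ?_⟩
  by_contra hxR
  exact himb <| (hCb v w x hvw hxw.symm hxv.symm).of_agree hblack
    (agree_of_not_mem_redVertices hG hC hxR hxw.symm)
    (agree_of_not_mem_redVertices hG hC hxR hxv.symm)

lemma card_compl_redVertices_le_rank (hG : Symm G) (hC : Symm C) (hCb : IsBalanced C)
    {u v : Fin n} (huv : u ≠ v) (hred : G u v ≠ C u v) :
    n - (redVertices G C).card ≤ rank G u v := by
  have hcompl : n - (redVertices G C).card = (redVertices G C)ᶜ.card := by
    rw [card_compl, Fintype.card_fin]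
  rw [hcompl]
  refine card_le_card fun x hx => ?_
  have hxR : x ∉ redVertices G C := mem_compl.mp hx
  have hxu : x ≠ u := by
    rintro rfl; exact hxR (mem_redVertices.mpr ⟨v, huv.symm, hred⟩)
  have hxv : x ≠ v := by
    rintro rfl; exact hxR (mem_redVertices.mpr ⟨u, huv, hG.ne_symm hC hred⟩)
  simp only [mem_filter, mem_univ, true_and]
  exact ⟨hxu, hxv, (hCb u v x huv hxv.symm hxu.symm).not_of_disagree_one hred
    (agree_of_not_mem_redVertices hG hC hxR hxv.symm)
    (agree_of_not_mem_redVertices hG hC hxR hxu.symm)⟩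

lemma rank_lt_rank_of_red_of_black_s11 (hG : Symm G) (hC : Symm C) (hCb : IsBalanced C)
    (hR : 2 * (redVertices G C).card ≤ n) {u v w : Fin n} (huv : u ≠ v) (hvw : v ≠ w)
    (hred : G u v ≠ C u v) (hblack : G v w = C v w) :
    rank G v w < rank G u v := by
  have hv : v ∈ redVertices G C := mem_redVertices.mpr ⟨u, huv, hG.ne_symm hC hred⟩
  have hRpos : 0 < (redVertices G C).card := card_pos.mpr ⟨v, hv⟩
  calc rank G v w ≤ ((redVertices G C).erase v).card :=
        rank_le_card_erase_redVertices hG hC hCb hvw hblack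
    _ < n - (redVertices G C).card := by rw [card_erase_of_mem hv]; omega
    _ ≤ rank G u v := card_compl_redVertices_le_rank hG hC hCb huv hred

end

/-- If at most `n/2` vertices are incident to a red edge, then in every
imbalanced triad with exactly one red edge the red edge has strictly greater rank than the
other two edges; consequently every maximal-rank edge of an imbalanced triad is red. -/
theorem red_flipped_vertices (n : ℕ) (G C : SignedGraph n) (hG : Symm G)
    (hC : IsClosestBalanced G C)
    (hred : ((univ.filter (fun u : Fin n => ∃ v, v ≠ u ∧ G u v ≠ C u v)).card : ℝ) ≤ (n : ℝ) / 2) :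
    (∀ u v w : Fin n, u ≠ v → w ≠ u → w ≠ v → ¬ BalancedTriad G u v w →
      G u v ≠ C u v → G v w = C v w → G u w = C u w →
      rank G v w < rank G u v ∧ rank G u w < rank G u v) ∧
    (∀ u v w : Fin n, u ≠ v → w ≠ u → w ≠ v → ¬ BalancedTriad G u v w →
      rank G v w ≤ rank G u v → rank G u w ≤ rank G u v → G u v ≠ C u v) := by
  obtain ⟨hCs, hCb, -⟩ := hC
  have hR : 2 * (redVertices G C).card ≤ n := by
    rw [redVertices]; rify; linarith
  have key := @rank_lt_rank_of_red_of_black_s11 n G C hG hCs hCb hR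
  refine ⟨fun u v w huv hwu hwv _ ruv bvw buw => ⟨key huv hwv.symm ruv bvw, ?_⟩, ?_⟩
  · simpa only [rank_comm hG v u] using key huv.symm hwu.symm (hG.ne_symm hCs ruv) buw
  · -- if `uv` were black, one of the other two edges would be red and outrank it
    intro u v w huv hwu hwv himb hvw huw buv
    by_cases bvw : G v w = C v w
    · by_cases buw : G u w = C u w
      · exact himb ((hCb u v w huv hwv.symm hwu.symm).of_agree buv bvw buw)
      · have := key hwu huv (hG.ne_symm hCs buw) buv
        rw [rank_comm hG w u] at this
        omega
    · have := key hwv huv.symm (hG.ne_symm hCs bvw) (hG.eq_symm hCs buv)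
      rw [rank_comm hG w v, rank_comm hG v u] at this
      omega
end
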